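/- Consider the chain complex 0 → ℤ →^{Φ_2} ℤ^2 →^{Φ_1} ℤ^{11} → 0 where Φ_2 = 0 and Φ_1 sends the first basis vector to e_7+e_8+e_9−e_1−e_2−e_3−e_4−e_5−e_6 and the second to e_{10}+e_{11}−e_1−e_2−e_3−e_4−e_5−e_6. Then H_2 ≅ ℤ, H_1 = 0, and H_0 ≅ ℤ^9. (Bredon homology of p6.) -/
import Mathlib


open LinearMap Submodule

noncomputable def Phi2 : ℤ →ₗ[ℤ] (Fin 2 → ℤ) := 0

noncomputable def Phi1 : (Fin 2 → ℤ) →ₗ[ℤ] (Fin 11 → ℤ) :=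
  Matrix.toLin' !![-1, -1; -1, -1; -1, -1; -1, -1; -1, -1; -1, -1; 1, 0; 1, 0; 1, 0; 0, 1; 0, 1]

abbrev H1 : Type := ↥(ker Phi1) ⧸ (Submodule.comap (ker Phi1).subtype (range Phi2))

abbrev H0 : Type := (Fin 11 → ℤ) ⧸ (range Phi1)

@[simp] lemma ev2_0 {α : Type*} (a0 a1 : α) : ![a0, a1] (0 : Fin 2) = a0 := rfl
@[simp] lemma ev2_1 {α : Type*} (a0 a1 : α) : ![a0, a1] (1 : Fin 2) = a1 := rfl
@[simp] lemma ev9_0 {α : Type*} (a0 a1 a2 a3 a4 a5 a6 a7 a8 : α) : ![a0, a1, a2, a3, a4, a5, a6, a7, a8] (0 : Fin 9) = a0 := rfl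
@[simp] lemma ev9_1 {α : Type*} (a0 a1 a2 a3 a4 a5 a6 a7 a8 : α) : ![a0, a1, a2, a3, a4, a5, a6, a7, a8] (1 : Fin 9) = a1 := rfl
@[simp] lemma ev9_2 {α : Type*} (a0 a1 a2 a3 a4 a5 a6 a7 a8 : α) : ![a0, a1, a2, a3, a4, a5, a6, a7, a8] (2 : Fin 9) = a2 := rfl
@[simp] lemma ev9_3 {α : Type*} (a0 a1 a2 a3 a4 a5 a6 a7 a8 : α) : ![a0, a1, a2, a3, a4, a5, a6, a7, a8] (3 : Fin 9) = a3 := rfl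
@[simp] lemma ev9_4 {α : Type*} (a0 a1 a2 a3 a4 a5 a6 a7 a8 : α) : ![a0, a1, a2, a3, a4, a5, a6, a7, a8] (4 : Fin 9) = a4 := rfl
@[simp] lemma ev9_5 {α : Type*} (a0 a1 a2 a3 a4 a5 a6 a7 a8 : α) : ![a0, a1, a2, a3, a4, a5, a6, a7, a8] (5 : Fin 9) = a5 := rfl
@[simp] lemma ev9_6 {α : Type*} (a0 a1 a2 a3 a4 a5 a6 a7 a8 : α) : ![a0, a1, a2, a3, a4, a5, a6, a7, a8] (6 : Fin 9) = a6 := rfl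
@[simp] lemma ev9_7 {α : Type*} (a0 a1 a2 a3 a4 a5 a6 a7 a8 : α) : ![a0, a1, a2, a3, a4, a5, a6, a7, a8] (7 : Fin 9) = a7 := rfl
@[simp] lemma ev9_8 {α : Type*} (a0 a1 a2 a3 a4 a5 a6 a7 a8 : α) : ![a0, a1, a2, a3, a4, a5, a6, a7, a8] (8 : Fin 9) = a8 := rfl
@[simp] lemma ev11_0 {α : Type*} (a0 a1 a2 a3 a4 a5 a6 a7 a8 a9 a10 : α) : ![a0, a1, a2, a3, a4, a5, a6, a7, a8, a9, a10] (0 : Fin 11) = a0 := rfl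
@[simp] lemma ev11_1 {α : Type*} (a0 a1 a2 a3 a4 a5 a6 a7 a8 a9 a10 : α) : ![a0, a1, a2, a3, a4, a5, a6, a7, a8, a9, a10] (1 : Fin 11) = a1 := rfl
@[simp] lemma ev11_2 {α : Type*} (a0 a1 a2 a3 a4 a5 a6 a7 a8 a9 a10 : α) : ![a0, a1, a2, a3, a4, a5, a6, a7, a8, a9, a10] (2 : Fin 11) = a2 := rfl
@[simp] lemma ev11_3 {α : Type*} (a0 a1 a2 a3 a4 a5 a6 a7 a8 a9 a10 : α) : ![a0, a1, a2, a3, a4, a5, a6, a7, a8, a9, a10] (3 : Fin 11) = a3 := rfl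
@[simp] lemma ev11_4 {α : Type*} (a0 a1 a2 a3 a4 a5 a6 a7 a8 a9 a10 : α) : ![a0, a1, a2, a3, a4, a5, a6, a7, a8, a9, a10] (4 : Fin 11) = a4 := rfl
@[simp] lemma ev11_5 {α : Type*} (a0 a1 a2 a3 a4 a5 a6 a7 a8 a9 a10 : α) : ![a0, a1, a2, a3, a4, a5, a6, a7, a8, a9, a10] (5 : Fin 11) = a5 := rfl
@[simp] lemma ev11_6 {α : Type*} (a0 a1 a2 a3 a4 a5 a6 a7 a8 a9 a10 : α) : ![a0, a1, a2, a3, a4, a5, a6, a7, a8, a9, a10] (6 : Fin 11) = a6 := rfl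
@[simp] lemma ev11_7 {α : Type*} (a0 a1 a2 a3 a4 a5 a6 a7 a8 a9 a10 : α) : ![a0, a1, a2, a3, a4, a5, a6, a7, a8, a9, a10] (7 : Fin 11) = a7 := rfl
@[simp] lemma ev11_8 {α : Type*} (a0 a1 a2 a3 a4 a5 a6 a7 a8 a9 a10 : α) : ![a0, a1, a2, a3, a4, a5, a6, a7, a8, a9, a10] (8 : Fin 11) = a8 := rfl
@[simp] lemma ev11_9 {α : Type*} (a0 a1 a2 a3 a4 a5 a6 a7 a8 a9 a10 : α) : ![a0, a1, a2, a3, a4, a5, a6, a7, a8, a9, a10] (9 : Fin 11) = a9 := rfl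
@[simp] lemma ev11_10 {α : Type*} (a0 a1 a2 a3 a4 a5 a6 a7 a8 a9 a10 : α) : ![a0, a1, a2, a3, a4, a5, a6, a7, a8, a9, a10] (10 : Fin 11) = a10 := rfl

lemma Phi1_apply (c : Fin 2 → ℤ) : Phi1 c =
    ![-(c 0) - c 1, -(c 0) - c 1, -(c 0) - c 1, -(c 0) - c 1, -(c 0) - c 1, -(c 0) - c 1,
      c 0, c 0, c 0, c 1, c 1] := by
  funext i
  simp only [Phi1, Matrix.toLin'_apply, Matrix.mulVec, dotProduct, Fin.sum_univ_two]
  fin_cases i <;>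
    first
      | exact show (-1 : ℤ) * c 0 + (-1) * c 1 = -(c 0) - c 1 by ring
      | exact show (1 : ℤ) * c 0 + 0 * c 1 = c 0 by ring
      | exact show (0 : ℤ) * c 0 + 1 * c 1 = c 1 by ring

def psi : (Fin 11 → ℤ) →ₗ[ℤ] (Fin 9 → ℤ) where
  toFun x := ![x 0 + x 6 + x 9, x 1 + x 6 + x 9, x 2 + x 6 + x 9, x 3 + x 6 + x 9,
    x 4 + x 6 + x 9, x 5 + x 6 + x 9, x 7 - x 6, x 8 - x 6, x 10 - x 9]
  map_add' x y := by funext i; fin_cases i <;> simp <;> ring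
  map_smul' c x := by funext i; fin_cases i <;> simp <;> ring

lemma psi_apply (x : Fin 11 → ℤ) : psi x = ![x 0 + x 6 + x 9, x 1 + x 6 + x 9, x 2 + x 6 + x 9,
    x 3 + x 6 + x 9, x 4 + x 6 + x 9, x 5 + x 6 + x 9, x 7 - x 6, x 8 - x 6, x 10 - x 9] := rfl

lemma ker_psi : ker psi = range Phi1 := by
  apply le_antisymm
  · intro x hx
    have h : ∀ i, psi x i = 0 := fun i => congrFun (mem_ker.mp hx) i
    refine ⟨![x 6, x 9], ?_⟩
    rw [Phi1_apply]
    have h0 := h 0; have h1 := h 1; have h2 := h 2; have h3 := h 3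
    have h4 := h 4; have h5 := h 5; have h6 := h 6; have h7 := h 7; have h8 := h 8
    simp only [psi_apply, ev9_0, ev9_1, ev9_2, ev9_3, ev9_4, ev9_5, ev9_6, ev9_7, ev9_8]
      at h0 h1 h2 h3 h4 h5 h6 h7 h8
    funext i
    fin_cases i <;> simp <;> omega
  · rintro x ⟨c, rfl⟩
    rw [mem_ker, Phi1_apply]
    funext i
    fin_cases i <;> simp [psi_apply] <;> ring

lemma psi_surj : Function.Surjective psi := by
  intro y
  refine ⟨![y 0, y 1, y 2, y 3, y 4, y 5, 0, y 6, y 7, 0, y 8], ?_⟩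
  funext i
  fin_cases i <;> simp [psi_apply]

lemma ker_Phi1 : ker Phi1 = ⊥ := by
  rw [eq_bot_iff]
  intro c hc
  have h : ∀ i, Phi1 c i = 0 := fun i => congrFun (mem_ker.mp hc) i
  have h6 := h 6; have h9 := h 9
  rw [Phi1_apply] at h6 h9
  simp only [ev11_6, ev11_9] at h6 h9
  simp only [Submodule.mem_bot]
  funext i
  fin_cases i <;> simpa

theorem stmt_18 :
    Nonempty (↥(ker Phi2) ≃ₗ[ℤ] ℤ) ∧
    Subsingleton H1 ∧
    Nonempty (H0 ≃ₗ[ℤ] (Fin 9 → ℤ)) := by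
  refine ⟨⟨(LinearEquiv.ofEq _ _ (by rw [Phi2, ker_zero])).trans Submodule.topEquiv⟩, ?_, ?_⟩
  · haveI : Subsingleton ↥(ker Phi1) := by rw [ker_Phi1]; infer_instance
    exact Quotient.instSubsingletonQuotient _
  · exact ⟨(Submodule.quotEquivOfEq _ _ ker_psi.symm).trans
      (psi.quotKerEquivOfSurjective psi_surj)⟩
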